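/- arXiv:2004.05167 — 5 statements merged into one kernel-verified Lean document; each statement's English description precedes it below -/
import Mathlib

section
/- Suppose A is an individually fair cohort selection mechanism selecting cohorts of size k which is monotonic, i.e., for all u, v ∈ U with p(u) ≥ p(v) and every C ⊆ U∖{u,v} with |C| = k−1 one has A(C ∪ {u}) ≥ A(C ∪ {v}). Then for all distinct u, v ∈ U: (1/2)·Σ_{C ⊆ U∖{u,v}, |C| = k−1} |A(C ∪ {u}) − A(C ∪ {v})| ≤ (1/2)·D(u,v). (This is the statement that a monotonic individually fair mechanism satisfies 0.5-Notion 1 for the swapping mapping.) -/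
open Finset

/- Splitting the cohorts containing `u` according to whether they contain `v`, the cohorts
containing both contribute equally to `p u` and `p v`, so `p u - p v` is the sum of
`A (C ∪ {u}) - A (C ∪ {v})` over the `(k-1)`-sets `C` avoiding `u` and `v`. Monotonicity makes
every summand have the sign of `p u - p v`, so the sum of absolute values is `|p u - p v|`,
which individual fairness bounds by `D u v`. -/

section

variable {α : Type*} [Fintype α] [DecidableEq α]

def inclusionProb (A : Finset α → ℝ) (k : ℕ) (u : α) : ℝ :=
  ∑ C ∈ (univ : Finset α).powerset.filter (fun C => C.card = k ∧ u ∈ C), A C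

lemma sum_insert_powerset_sdiff_pair (A : Finset α → ℝ) {u v : α} (huv : u ≠ v) (k : ℕ) :
    ∑ C ∈ ((univ : Finset α) \ {u, v}).powerset.filter (fun C => C.card = k), A (insert u C)
      = ∑ C ∈ (univ : Finset α).powerset.filter (fun C => C.card = k + 1 ∧ u ∈ C ∧ v ∉ C),
          A C := by
  apply sum_nbij' (insert u) (erase · u)
  · intro C hC
    simp only [mem_filter, mem_powerset, subset_sdiff, disjoint_insert_right,
      disjoint_singleton_right] at hC
    obtain ⟨⟨-, hu, hv⟩, hcard⟩ := hC
    simp [card_insert_of_notMem hu, hcard, huv.symm, hv]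
  · intro C hC
    simp only [mem_filter, mem_powerset] at hC
    obtain ⟨-, hcard, hu, hv⟩ := hC
    simp [card_erase_of_mem hu, hcard, subset_sdiff, hv]
  · intro C hC
    simp only [mem_filter, mem_powerset, subset_sdiff, disjoint_insert_right] at hC
    exact erase_insert hC.1.2.1
  · intro C hC
    simp only [mem_filter] at hC
    exact insert_erase hC.2.2.1
  · intro C _
    rfl

lemma inclusionProb_eq_sum_mem_add_sum_notMem (A : Finset α → ℝ) (k : ℕ) (u v : α) :
    inclusionProb A k u
      = ∑ C ∈ (univ : Finset α).powerset.filter (fun C => C.card = k ∧ u ∈ C ∧ v ∈ C), A C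
        + ∑ C ∈ (univ : Finset α).powerset.filter (fun C => C.card = k ∧ u ∈ C ∧ v ∉ C),
            A C := by
  rw [inclusionProb, ← sum_filter_add_sum_filter_not _ (fun C => v ∈ C), filter_filter,
    filter_filter]
  simp only [and_assoc]

lemma sum_sub_insert_eq_inclusionProb_sub (A : Finset α → ℝ) {u v : α} (huv : u ≠ v) (k : ℕ) :
    ∑ C ∈ ((univ : Finset α) \ {u, v}).powerset.filter (fun C => C.card = k),
        (A (insert u C) - A (insert v C))
      = inclusionProb A (k + 1) u - inclusionProb A (k + 1) v := by
  rw [sum_sub_distrib, sum_insert_powerset_sdiff_pair A huv, pair_comm,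
    sum_insert_powerset_sdiff_pair A huv.symm, inclusionProb_eq_sum_mem_add_sum_notMem A _ u v,
    inclusionProb_eq_sum_mem_add_sum_notMem A _ v u]
  have hboth : (univ : Finset α).powerset.filter (fun C => C.card = k + 1 ∧ u ∈ C ∧ v ∈ C)
      = (univ : Finset α).powerset.filter (fun C => C.card = k + 1 ∧ v ∈ C ∧ u ∈ C) := by
    simp only [and_comm (a := u ∈ _)]
  rw [hboth]
  ring

lemma sum_abs_sub_insert_eq_of_le (A : Finset α → ℝ) {u v : α} (huv : u ≠ v) (k : ℕ)
    (hmono : ∀ C ∈ ((univ : Finset α) \ {u, v}).powerset, C.card = k →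
      A (insert v C) ≤ A (insert u C)) :
    ∑ C ∈ ((univ : Finset α) \ {u, v}).powerset.filter (fun C => C.card = k),
        |A (insert u C) - A (insert v C)|
      = inclusionProb A (k + 1) u - inclusionProb A (k + 1) v := by
  rw [← sum_sub_insert_eq_inclusionProb_sub A huv]
  refine sum_congr rfl fun C hC => abs_of_nonneg (sub_nonneg.2 ?_)
  rw [mem_filter] at hC
  exact hmono C hC.1 hC.2

end

theorem stmt1_general {α : Type*} [Fintype α] [DecidableEq α] (k : ℕ) (hk : 1 ≤ k)
    (A : Finset α → ℝ) (D : α → α → ℝ) (p : α → ℝ)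
    (hp : ∀ u, p u =
      ∑ C ∈ (univ : Finset α).powerset.filter (fun C => C.card = k ∧ u ∈ C), A C)
    (hfair : ∀ u v, |p u - p v| ≤ D u v)
    (hmono : ∀ u v : α, p v ≤ p u →
      ∀ C ∈ ((univ : Finset α) \ {u, v}).powerset, C.card = k - 1 →
        A (insert v C) ≤ A (insert u C)) :
    ∀ u v : α, u ≠ v →
      (1/2) * ∑ C ∈ ((univ : Finset α) \ {u, v}).powerset.filter (fun C => C.card = k - 1),
          |A (insert u C) - A (insert v C)|
        ≤ (1/2) * D u v := by
  intro u v huv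
  obtain rfl : p = inclusionProb A k := funext hp
  obtain ⟨j, rfl⟩ : ∃ j, k = j + 1 := ⟨k - 1, by omega⟩
  simp only [Nat.add_sub_cancel] at hmono ⊢
  gcongr
  rcases le_total (inclusionProb A (j + 1) v) (inclusionProb A (j + 1) u) with h | h
  · rw [sum_abs_sub_insert_eq_of_le A huv j (hmono u v h)]
    exact (le_abs_self _).trans (hfair u v)
  · simp_rw [pair_comm u v, abs_sub_comm (A (insert u _))]
    rw [sum_abs_sub_insert_eq_of_le A huv.symm j (hmono v u h)]
    exact (le_abs_self _).trans ((abs_sub_comm _ _).trans_le (hfair u v))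

/-- A monotonic, individually fair cohort selection mechanism selecting
cohorts of size `k` satisfies `0.5`-Notion 1 for the swapping mapping: for all distinct
`u, v`, `(1/2) Σ_{C ⊆ U∖{u,v}, |C| = k−1} |A(C ∪ {u}) − A(C ∪ {v})| ≤ (1/2) D(u,v)`. -/
theorem stmt1 {α : Type*} [Fintype α] [DecidableEq α] (k : ℕ) (hk : 1 ≤ k)
    (A : Finset α → ℝ) (D : α → α → ℝ) (p : α → ℝ)
    (hp : ∀ u, p u =
      ∑ C ∈ (univ : Finset α).powerset.filter (fun C => C.card = k ∧ u ∈ C), A C)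
    (hA0 : ∀ C, 0 ≤ A C)
    (hAk : ∀ C : Finset α, C.card ≠ k → A C = 0)
    (hA1 : ∑ C ∈ (univ : Finset α).powerset, A C = 1)
    (hD : ∀ u v, 0 ≤ D u v)
    (hfair : ∀ u v, |p u - p v| ≤ D u v)
    (hmono : ∀ u v : α, p v ≤ p u →
      ∀ C ∈ ((univ : Finset α) \ {u, v}).powerset, C.card = k - 1 →
        A (insert v C) ≤ A (insert u C)) :
    ∀ u v : α, u ≠ v →
      (1/2) * ∑ C ∈ ((univ : Finset α) \ {u, v}).powerset.filter (fun C => C.card = k - 1),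
          |A (insert u C) - A (insert v C)|
        ≤ (1/2) * D u v :=
  stmt1_general k hk A D p hp hfair hmono
end

section
/- For all distinct u, v ∈ U and every integer k ≥ 1: w(u) · Σ_{S ⊆ U∖{u}, |S| ≥ k−1} P^{U∖{u}}[S] · (k/(|S|+1)) − w(v) · Σ_{S ⊆ U∖{v}, |S| ≥ k−1} P^{U∖{v}}[S] · (k/(|S|+1)) = (w(u) − w(v)) · Σ_{S ⊆ U∖{u,v}, |S| ≥ k−1} P^{U∖{u,v}}[S] · (k/(|S|+1)). -/
/-!
Conditioning on whether `v` lies in the random set, the `Pw`-expectation of `f |S|` over subsets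
of `insert v B` (with `v ∉ B`) is `(1 - w v) · E_B[f |S|] + w v · E_B[f (|S| + 1)]`.
Applying this with `B = U ∖ {u, v}` to both sums, the terms `w u · w v · E_B[f (|S| + 1)]`
cancel and `(w u - w v) · E_B[f |S|]` remains; all that matters is that the summand depends on `S`
only through `|S|`.
-/

open Finset

/-- `Pw w S' S = (∏_{x∈S} w(x)) · (∏_{x∈S'∖S} (1 − w(x)))`. -/
def Pw {α : Type*} [DecidableEq α] (w : α → ℝ) (S' S : Finset α) : ℝ :=
  (∏ x ∈ S, w x) * (∏ x ∈ S' \ S, (1 - w x))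

section

variable {α : Type*} [DecidableEq α] (w : α → ℝ) {B S : Finset α} {v : α}

lemma Pw_insert_of_notMem (hv : v ∉ B) (hS : S ⊆ B) :
    Pw w (insert v B) S = (1 - w v) * Pw w B S := by
  rw [Pw, Pw, insert_sdiff_of_notMem _ fun h => hv (hS h),
    prod_insert fun h => hv (mem_sdiff.mp h).1]
  ring

lemma Pw_insert_insert (hv : v ∉ B) (hS : S ⊆ B) :
    Pw w (insert v B) (insert v S) = w v * Pw w B S := by
  rw [Pw, Pw, insert_sdiff_insert, sdiff_insert_of_notMem hv,
    prod_insert fun h => hv (hS h)]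
  ring

lemma sum_powerset_insert_Pw_mul (hv : v ∉ B) (f : ℕ → ℝ) :
    ∑ S ∈ (insert v B).powerset, Pw w (insert v B) S * f #S
      = (1 - w v) * ∑ T ∈ B.powerset, Pw w B T * f #T
        + w v * ∑ T ∈ B.powerset, Pw w B T * f (#T + 1) := by
  rw [sum_powerset_insert hv, mul_sum, mul_sum]
  congr 1 <;> refine sum_congr rfl fun T hT => ?_
  · rw [Pw_insert_of_notMem w hv (mem_powerset.mp hT)]; ring
  · rw [Pw_insert_insert w hv (mem_powerset.mp hT),
      card_insert_of_notMem fun h => hv (mem_powerset.mp hT h)]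
    ring

lemma mul_sum_powerset_insert_Pw_sub {u : α} (hu : u ∉ B) (hv : v ∉ B) (f : ℕ → ℝ) :
    w u * ∑ S ∈ (insert v B).powerset, Pw w (insert v B) S * f #S
      - w v * ∑ S ∈ (insert u B).powerset, Pw w (insert u B) S * f #S
      = (w u - w v) * ∑ T ∈ B.powerset, Pw w B T * f #T := by
  rw [sum_powerset_insert_Pw_mul w hv, sum_powerset_insert_Pw_mul w hu]
  ring

end

lemma univ_sdiff_singleton_eq_insert {α : Type*} [Fintype α] [DecidableEq α] {u v : α}
    (huv : u ≠ v) : (univ : Finset α) \ {u} = insert v (univ \ {u, v}) := by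
  rw [pair_comm, sdiff_insert, insert_erase (by simpa using huv.symm)]

theorem stmt6_general {α : Type*} [Fintype α] [DecidableEq α] (w : α → ℝ)
    (k : ℕ) (u v : α) (huv : u ≠ v) :
    w u *
        (∑ S ∈ ((univ : Finset α) \ {u}).powerset.filter (fun S => k - 1 ≤ S.card),
          Pw w (univ \ {u}) S * ((k : ℝ) / ((S.card : ℝ) + 1)))
      - w v *
        (∑ S ∈ ((univ : Finset α) \ {v}).powerset.filter (fun S => k - 1 ≤ S.card),
          Pw w (univ \ {v}) S * ((k : ℝ) / ((S.card : ℝ) + 1)))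
      = (w u - w v) *
        ∑ S ∈ ((univ : Finset α) \ {u, v}).powerset.filter (fun S => k - 1 ≤ S.card),
          Pw w (univ \ {u, v}) S * ((k : ℝ) / ((S.card : ℝ) + 1)) := by
  let f : ℕ → ℝ := fun n => if k - 1 ≤ n then (k : ℝ) / (n + 1) else 0
  have sum_filter_eq (A : Finset α) :
      ∑ S ∈ A.powerset.filter (fun S => k - 1 ≤ S.card),
          Pw w A S * ((k : ℝ) / ((S.card : ℝ) + 1))
        = ∑ S ∈ A.powerset, Pw w A S * f #S := by
    simp only [f, sum_filter, mul_ite, mul_zero]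
  have hu : u ∉ (univ : Finset α) \ {u, v} := by simp
  have hv : v ∉ (univ : Finset α) \ {u, v} := by simp
  rw [sum_filter_eq, sum_filter_eq, sum_filter_eq, univ_sdiff_singleton_eq_insert huv,
    univ_sdiff_singleton_eq_insert huv.symm, pair_comm v u]
  exact mul_sum_powerset_insert_Pw_sub w hu hv f

/-- for distinct `u, v` and `k ≥ 1`,
`w(u)·Σ_{S ⊆ U∖{u}, |S| ≥ k−1} P^{U∖{u}}[S]·(k/(|S|+1))
 − w(v)·Σ_{S ⊆ U∖{v}, |S| ≥ k−1} P^{U∖{v}}[S]·(k/(|S|+1))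
 = (w(u) − w(v)) · Σ_{S ⊆ U∖{u,v}, |S| ≥ k−1} P^{U∖{u,v}}[S]·(k/(|S|+1))`. -/
theorem stmt6 {α : Type*} [Fintype α] [DecidableEq α] (w : α → ℝ)
    (hw : ∀ x, 0 ≤ w x ∧ w x ≤ 1) (k : ℕ) (hk : 1 ≤ k) (u v : α) (huv : u ≠ v) :
    w u *
        (∑ S ∈ ((univ : Finset α) \ {u}).powerset.filter (fun S => k - 1 ≤ S.card),
          Pw w (univ \ {u}) S * ((k : ℝ) / ((S.card : ℝ) + 1)))
      - w v *
        (∑ S ∈ ((univ : Finset α) \ {v}).powerset.filter (fun S => k - 1 ≤ S.card),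
          Pw w (univ \ {v}) S * ((k : ℝ) / ((S.card : ℝ) + 1)))
      = (w u - w v) *
        ∑ S ∈ ((univ : Finset α) \ {u, v}).powerset.filter (fun S => k - 1 ≤ S.card),
          Pw w (univ \ {u, v}) S * ((k : ℝ) / ((S.card : ℝ) + 1)) :=
  stmt6_general w k u v huv
end

section
/- For all distinct u, v ∈ U and every integer k ≥ 1: κ1 ≤ ((k+1)/k) · κ2. -/
/-! Termwise, `k / (|S| + 1) ≤ ((k + 1) / k) · k / (|S| + 2)` is equivalent to `k ≤ |S| + 1`,
which holds on the whole range of `κ1`; the additional terms of `κ2` are nonnegative. -/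

open Finset

lemma Pw_nonneg {α : Type*} [DecidableEq α] {w : α → ℝ} (hw : ∀ x, 0 ≤ w x ∧ w x ≤ 1)
    (S' S : Finset α) : 0 ≤ Pw w S' S :=
  mul_nonneg (prod_nonneg fun x _ => (hw x).1) (prod_nonneg fun x _ => sub_nonneg.2 (hw x).2)

/-- For `k = 0` both sides vanish (`1 / 0 = 0`); otherwise the right side is `(k + 1) / (c + 2)`. -/
lemma div_add_one_le_mul_div_add_two {k c : ℕ} (hkc : k ≤ c + 1) :
    (k : ℝ) / (c + 1) ≤ ((k + 1) / k) * (k / (c + 2)) := by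
  rcases k.eq_zero_or_pos with rfl | hk
  · simp
  have hkc' : (k : ℝ) ≤ c + 1 := by exact_mod_cast hkc
  rw [div_mul_div_comm, div_le_div_iff₀ (by positivity) (by positivity)]
  nlinarith

theorem stmt8_general {α : Type*} [Fintype α] [DecidableEq α] (w : α → ℝ)
    (hw : ∀ x, 0 ≤ w x ∧ w x ≤ 1) (k : ℕ) (u v : α)
    (κ1 κ2 : ℝ)
    (hκ1 : κ1 = ∑ S ∈ ((univ : Finset α) \ {u, v}).powerset.filter (fun S => k - 1 ≤ S.card),
      Pw w (univ \ {u, v}) S * ((k : ℝ) / ((S.card : ℝ) + 1)))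
    (hκ2 : κ2 = ∑ S ∈ ((univ : Finset α) \ {u, v}).powerset.filter (fun S => k - 2 ≤ S.card),
      Pw w (univ \ {u, v}) S * ((k : ℝ) / ((S.card : ℝ) + 2))) :
    κ1 ≤ (((k : ℝ) + 1) / (k : ℝ)) * κ2 := by
  subst hκ1 hκ2
  rw [mul_sum]
  calc _ ≤ ∑ S ∈ ((univ : Finset α) \ {u, v}).powerset.filter (fun S => k - 1 ≤ S.card),
          ((k : ℝ) + 1) / k * (Pw w (univ \ {u, v}) S * (k / ((S.card : ℝ) + 2))) := by
        refine sum_le_sum fun S hS => ?_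
        rw [mul_left_comm]
        exact mul_le_mul_of_nonneg_left
          (div_add_one_le_mul_div_add_two (by have := (mem_filter.1 hS).2; omega))
          (Pw_nonneg hw _ S)
    _ ≤ _ := by
        refine sum_le_sum_of_subset_of_nonneg
          (monotone_filter_right _ fun _ _ h => by omega) fun S _ _ => ?_
        have := Pw_nonneg hw (univ \ {u, v}) S
        positivity

/-- for distinct `u, v` and `k ≥ 1`, `κ1 ≤ ((k+1)/k)·κ2`, where
`κ1 = Σ_{S ⊆ U∖{u,v}, |S| ≥ k−1} P^{U∖{u,v}}[S]·(k/(|S|+1))` and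
`κ2 = Σ_{S ⊆ U∖{u,v}, |S| ≥ k−2} P^{U∖{u,v}}[S]·(k/(|S|+2))`. -/
theorem stmt8 {α : Type*} [Fintype α] [DecidableEq α] (w : α → ℝ)
    (hw : ∀ x, 0 ≤ w x ∧ w x ≤ 1) (k : ℕ) (hk : 1 ≤ k) (u v : α) (huv : u ≠ v)
    (κ1 κ2 : ℝ)
    (hκ1 : κ1 = ∑ S ∈ ((univ : Finset α) \ {u, v}).powerset.filter (fun S => k - 1 ≤ S.card),
      Pw w (univ \ {u, v}) S * ((k : ℝ) / ((S.card : ℝ) + 1)))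
    (hκ2 : κ2 = ∑ S ∈ ((univ : Finset α) \ {u, v}).powerset.filter (fun S => k - 2 ≤ S.card),
      Pw w (univ \ {u, v}) S * ((k : ℝ) / ((S.card : ℝ) + 2))) :
    κ1 ≤ (((k : ℝ) + 1) / (k : ℝ)) * κ2 :=
  stmt8_general w hw k u v κ1 κ2 hκ1 hκ2
end

section
/- Let U be a finite set, k ≥ 54 an integer, and w : U → ℝ with 0 ≤ w(x) ≤ 1 for all x ∈ U and Σ_{x∈U} w(x) = 3k/2. Define Z = Σ_{S ⊆ U, |S| ≥ k} P^U[S] and, for u ∈ U, p(u) = w(u) · (Σ_{S ⊆ U∖{u}, |S| ≥ k−1} P^{U∖{u}}[S] · (k/(|S|+1))) / Z. Then for all u, v ∈ U: 0.2 · w(u) ≤ p(u) ≤ 1.6 · w(u), and |p(u) − p(v)| ≥ 0.2 · |w(u) − w(v)|. -/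
/-!
Write `E_A[f]` for the expectation of `f |S|` when `S ⊆ A` contains each `x` independently with
probability `w x`. Then `Z = E_U[1_{|S| ≥ k}]` and `p u = w u · E_{U∖u}[q] / Z`, where
`q m = k / (m + 1)` for `m ≥ k - 1` (else `0`) takes values in `[0, 1]`.
The size `|S|` has mean `μ_A = Σ_A w` and variance `Σ_A w (1 - w) ≤ μ_A`, so for `μ_A ≤ 3k/2`
Chebyshev gives `P(||S| - μ_A| ≥ k/2) ≤ 6/k ≤ 1/9`. Since `μ_U = 3k/2`, this yields
`8/9 ≤ Z ≤ 1`, and whenever `μ_A ≥ 3k/2 - 2` also `E_A[q] ≥ 8/9 · 1/3 ≥ 1/5`.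
Hence `p u = w u · r` with `r ∈ [1/5, 9/8]`. Conditioning on whether the other element belongs
to `S` gives `w u E_{U∖u}[f] - w v E_{U∖v}[f] = (w u - w v) E_{U∖{u,v}}[f]` for every `f`,
so `p u - p v = (w u - w v) E_{U∖{u,v}}[q] / Z` with the factor again at least `1/5`.
-/

open Finset

section CardExpect

variable {α : Type*} [DecidableEq α] {w : α → ℝ} {A S : Finset α} {u v : α}

namespace Pw

lemma nonneg (hw : ∀ x, 0 ≤ w x ∧ w x ≤ 1) (A S : Finset α) : 0 ≤ Pw w A S :=
  mul_nonneg (prod_nonneg fun x _ => (hw x).1) (prod_nonneg fun x _ => sub_nonneg.2 (hw x).2)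

lemma sum_powerset (w : α → ℝ) (A : Finset α) : ∑ S ∈ A.powerset, Pw w A S = 1 := by
  simp only [Pw, ← prod_add, add_sub_cancel, prod_const_one]

lemma insert_of_subset (hu : u ∉ A) (hS : S ⊆ A) :
    Pw w (insert u A) S = (1 - w u) * Pw w A S := by
  have huS : u ∉ S := fun h => hu (hS h)
  rw [Pw, Pw, insert_sdiff_of_notMem _ huS, prod_insert fun h => hu (mem_sdiff.1 h).1]
  ring

lemma insert_insert (hu : u ∉ A) (hS : S ⊆ A) :
    Pw w (insert u A) (insert u S) = w u * Pw w A S := by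
  rw [Pw, Pw, insert_sdiff_insert, sdiff_insert_of_notMem hu, prod_insert fun h => hu (hS h)]
  ring

end Pw

/-- The expectation of `f |S|` for the random `S ⊆ A` containing each `x` independently with
probability `w x`. -/
noncomputable def cardExpect (w : α → ℝ) (A : Finset α) (f : ℕ → ℝ) : ℝ :=
  ∑ S ∈ A.powerset, Pw w A S * f S.card

lemma cardExpect_const (w : α → ℝ) (A : Finset α) (c : ℝ) : cardExpect w A (fun _ => c) = c := by
  rw [cardExpect, ← sum_mul, Pw.sum_powerset, one_mul]

lemma cardExpect_add (w : α → ℝ) (A : Finset α) (f g : ℕ → ℝ) :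
    cardExpect w A (fun m => f m + g m) = cardExpect w A f + cardExpect w A g := by
  simp only [cardExpect, mul_add, sum_add_distrib]

lemma cardExpect_const_mul (w : α → ℝ) (A : Finset α) (c : ℝ) (f : ℕ → ℝ) :
    cardExpect w A (fun m => c * f m) = c * cardExpect w A f := by
  simp only [cardExpect, mul_sum, mul_left_comm]

lemma cardExpect_mono (hw : ∀ x, 0 ≤ w x ∧ w x ≤ 1) {f g : ℕ → ℝ} (h : ∀ m, f m ≤ g m) :
    cardExpect w A f ≤ cardExpect w A g :=
  sum_le_sum fun S _ => mul_le_mul_of_nonneg_left (h S.card) (Pw.nonneg hw A S)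

lemma cardExpect_le_of_le (hw : ∀ x, 0 ≤ w x ∧ w x ≤ 1) {f : ℕ → ℝ} {c : ℝ}
    (h : ∀ m, f m ≤ c) : cardExpect w A f ≤ c :=
  (cardExpect_mono hw h).trans_eq (cardExpect_const w A c)

lemma sum_filter_powerset_eq_cardExpect (w : α → ℝ) (A : Finset α) (P : ℕ → Prop)
    [DecidablePred P] (f : ℕ → ℝ) :
    ∑ S ∈ A.powerset.filter (fun S => P S.card), Pw w A S * f S.card
      = cardExpect w A (fun m => if P m then f m else 0) := by
  rw [sum_filter, cardExpect]
  exact sum_congr rfl fun S _ => by split_ifs <;> simp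

lemma cardExpect_insert (w : α → ℝ) (hu : u ∉ A) (f : ℕ → ℝ) :
    cardExpect w (insert u A) f
      = (1 - w u) * cardExpect w A f + w u * cardExpect w A (fun m => f (m + 1)) := by
  rw [cardExpect, sum_powerset_insert hu, cardExpect, cardExpect, mul_sum, mul_sum]
  congr 1
  · refine sum_congr rfl fun S hS => ?_
    rw [Pw.insert_of_subset hu (mem_powerset.1 hS), mul_assoc]
  · refine sum_congr rfl fun S hS => ?_
    have hSA := mem_powerset.1 hS
    rw [Pw.insert_insert hu hSA, card_insert_of_notMem fun h => hu (hSA h), mul_assoc]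

lemma cardExpect_erase (w : α → ℝ) (hu : u ∈ A) (f : ℕ → ℝ) :
    cardExpect w A f = (1 - w u) * cardExpect w (A.erase u) f
      + w u * cardExpect w (A.erase u) (fun m => f (m + 1)) := by
  conv_lhs => rw [← insert_erase hu]
  exact cardExpect_insert w (notMem_erase u A) f

lemma mul_cardExpect_erase_sub_mul_cardExpect_erase (w : α → ℝ) (hu : u ∈ A) (hv : v ∈ A)
    (f : ℕ → ℝ) :
    w u * cardExpect w (A.erase u) f - w v * cardExpect w (A.erase v) f
      = (w u - w v) * cardExpect w ((A.erase u).erase v) f := by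
  obtain rfl | huv := eq_or_ne u v
  · simp
  rw [cardExpect_erase w (mem_erase.2 ⟨huv.symm, hv⟩) f,
    cardExpect_erase w (mem_erase.2 ⟨huv, hu⟩) f, erase_right_comm]
  ring

lemma cardExpect_card_sub_sum_sq (w : α → ℝ) (A : Finset α) :
    cardExpect w A (fun m => ((m : ℝ) - ∑ x ∈ A, w x) ^ 2) = ∑ x ∈ A, w x * (1 - w x) := by
  induction A using Finset.induction_on with
  | empty => simp [cardExpect, Pw]
  | insert a A ha ih =>
    set μ := ∑ x ∈ A, w x
    rw [cardExpect_insert w ha, sum_insert ha, sum_insert ha, ← cardExpect_const_mul,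
      ← cardExpect_const_mul, ← cardExpect_add]
    calc cardExpect w A _ = cardExpect w A (fun m => ((m : ℝ) - μ) ^ 2 + w a * (1 - w a)) := by
          congr 1; funext m; push_cast; ring
      _ = _ := by rw [cardExpect_add, cardExpect_const, ih, add_comm]

lemma sum_erase_mem_Icc (hw : ∀ x, 0 ≤ w x ∧ w x ≤ 1) (A : Finset α) (v : α) :
    ∑ x ∈ A.erase v, w x ∈ Set.Icc (∑ x ∈ A, w x - 1) (∑ x ∈ A, w x) := by
  by_cases hv : v ∈ A
  · rw [← add_sum_erase A w hv]
    constructor <;> linarith [hw v]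
  · simp [erase_eq_of_notMem hv]

lemma cardExpect_indicator_mul_sq_le (hw : ∀ x, 0 ≤ w x ∧ w x ≤ 1) {d : ℝ} (hd : 0 ≤ d) :
    cardExpect w A (fun m => if d ≤ |(m : ℝ) - ∑ x ∈ A, w x| then 1 else 0) * d ^ 2
      ≤ ∑ x ∈ A, w x * (1 - w x) := by
  rw [mul_comm, ← cardExpect_const_mul, ← cardExpect_card_sub_sum_sq]
  refine cardExpect_mono hw fun m => ?_
  split_ifs with h
  · rw [mul_one]
    exact (pow_le_pow_left₀ hd h 2).trans_eq (sq_abs _)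
  · rw [mul_zero]
    positivity

section Threshold

variable {k : ℕ}

lemma cardExpect_indicator_half_le (hw : ∀ x, 0 ≤ w x ∧ w x ≤ 1) (hk : 54 ≤ k)
    (hμ : ∑ x ∈ A, w x ≤ 3 * (k : ℝ) / 2) :
    cardExpect w A (fun m => if (k : ℝ) / 2 ≤ |(m : ℝ) - ∑ x ∈ A, w x| then 1 else 0)
      ≤ 1 / 9 := by
  have hK : (54 : ℝ) ≤ k := by exact_mod_cast hk
  have hvar : ∑ x ∈ A, w x * (1 - w x) ≤ ∑ x ∈ A, w x :=
    sum_le_sum fun x _ => mul_le_of_le_one_right (hw x).1 (by linarith [(hw x).1])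
  have hcheb := cardExpect_indicator_mul_sq_le hw (A := A) (by positivity : (0 : ℝ) ≤ k / 2)
  refine le_of_mul_le_mul_right (hcheb.trans ?_) (by positivity : (0 : ℝ) < (k / 2) ^ 2)
  nlinarith

lemma le_cardExpect_of_near_mean (hw : ∀ x, 0 ≤ w x ∧ w x ≤ 1) (hk : 54 ≤ k)
    (hμ : ∑ x ∈ A, w x ≤ 3 * (k : ℝ) / 2) {f : ℕ → ℝ} {c : ℝ} (hc : 0 ≤ c)
    (hf0 : ∀ m, 0 ≤ f m) (hf : ∀ m : ℕ, |(m : ℝ) - ∑ x ∈ A, w x| < k / 2 → c ≤ f m) :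
    8 / 9 * c ≤ cardExpect w A f := by
  set tail := fun m : ℕ => if (k : ℝ) / 2 ≤ |(m : ℝ) - ∑ x ∈ A, w x| then (1 : ℝ) else 0
  have htail := cardExpect_indicator_half_le hw hk hμ
  calc 8 / 9 * c ≤ c + -c * cardExpect w A tail := by nlinarith
    _ = cardExpect w A (fun m => c + -c * tail m) := by
      rw [cardExpect_add, cardExpect_const, cardExpect_const_mul]
    _ ≤ cardExpect w A f := cardExpect_mono hw fun m => by
      simp only [tail]
      split_ifs with h
      · simpa using hf0 m
      · simpa using hf m (not_le.1 h)

lemma eight_ninths_le_cardExpect_indicator (hw : ∀ x, 0 ≤ w x ∧ w x ≤ 1) (hk : 54 ≤ k)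
    (hμ : ∑ x ∈ A, w x = 3 * (k : ℝ) / 2) :
    8 / 9 ≤ cardExpect w A (fun m => if k ≤ m then 1 else 0) := by
  have := le_cardExpect_of_near_mean hw hk hμ.le (f := fun m => if k ≤ m then 1 else 0)
    zero_le_one (fun m => by positivity) fun m hm => by
      have hkm : (k : ℝ) < m := by linarith [(abs_lt.1 hm).1]
      rw [if_pos (by exact_mod_cast hkm.le)]
  linarith

/-- The probability that a fixed element of an accepted set of size `m + 1` lies in the uniformly
chosen `k`-subset. -/
noncomputable def selectProb (k m : ℕ) : ℝ :=
  if k - 1 ≤ m then k / (m + 1) else 0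

lemma selectProb_nonneg (k m : ℕ) : 0 ≤ selectProb k m := by
  unfold selectProb
  split_ifs <;> positivity

lemma selectProb_le_one (k m : ℕ) : selectProb k m ≤ 1 := by
  unfold selectProb
  split_ifs with h
  · rw [div_le_one (by positivity)]
    exact_mod_cast (by omega : k ≤ m + 1)
  · exact zero_le_one

lemma one_fifth_le_cardExpect_selectProb (hw : ∀ x, 0 ≤ w x ∧ w x ≤ 1) (hk : 54 ≤ k)
    (hlo : 3 * (k : ℝ) / 2 - 2 ≤ ∑ x ∈ A, w x) (hhi : ∑ x ∈ A, w x ≤ 3 * (k : ℝ) / 2) :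
    1 / 5 ≤ cardExpect w A (selectProb k) := by
  have hnear : ∀ m : ℕ, |(m : ℝ) - ∑ x ∈ A, w x| < k / 2 → 1 / 3 ≤ selectProb k m := by
    intro m hm
    obtain ⟨hm₁, hm₂⟩ := abs_lt.1 hm
    have hkm : k < m + 2 := by exact_mod_cast (by linarith : (k : ℝ) < m + 2)
    rw [selectProb, if_pos (by omega), le_div_iff₀ (by positivity)]
    have hK : (54 : ℝ) ≤ k := by exact_mod_cast hk
    have hm2k : (m : ℝ) < 2 * k := by linarith
    linarith
  linarith [le_cardExpect_of_near_mean hw hk hhi (by norm_num) (selectProb_nonneg k) hnear]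

lemma cardExpect_selectProb_div_mem_Icc (hw : ∀ x, 0 ≤ w x ∧ w x ≤ 1) (hk : 54 ≤ k)
    (hlo : 3 * (k : ℝ) / 2 - 2 ≤ ∑ x ∈ A, w x) (hhi : ∑ x ∈ A, w x ≤ 3 * (k : ℝ) / 2)
    {Z : ℝ} (hZ_lo : 8 / 9 ≤ Z) (hZ_hi : Z ≤ 1) :
    cardExpect w A (selectProb k) / Z ∈ Set.Icc (1 / 5) (9 / 8) := by
  have hE_lo := one_fifth_le_cardExpect_selectProb hw hk hlo hhi
  have hE_hi := cardExpect_le_of_le hw (A := A) (selectProb_le_one k)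
  constructor
  · rw [le_div_iff₀ (by linarith)]
    nlinarith
  · rw [div_le_iff₀ (by linarith)]
    linarith

end Threshold

end CardExpect

/-- expressiveness of the Conditioning Mechanism. For `k ≥ 54`,
weights in `[0,1]` with `Σ_{x∈U} w(x) = 3k/2`, setting
`Z = Σ_{S ⊆ U, |S| ≥ k} P^U[S]` and
`p(u) = w(u)·(Σ_{S ⊆ U∖{u}, |S| ≥ k−1} P^{U∖{u}}[S]·(k/(|S|+1)))/Z`, we have
`0.2·w(u) ≤ p(u) ≤ 1.6·w(u)` and `|p(u) − p(v)| ≥ 0.2·|w(u) − w(v)|` for all `u, v`. -/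
theorem stmt18 {α : Type*} [Fintype α] [DecidableEq α] (w : α → ℝ)
    (hw : ∀ x, 0 ≤ w x ∧ w x ≤ 1) (k : ℕ) (hk : 54 ≤ k)
    (hsum : ∑ x, w x = 3 * (k : ℝ) / 2)
    (Z : ℝ)
    (hZ : Z = ∑ S ∈ (univ : Finset α).powerset.filter (fun S => k ≤ S.card), Pw w univ S)
    (p : α → ℝ)
    (hp : ∀ u, p u = w u *
      (∑ S ∈ ((univ : Finset α) \ {u}).powerset.filter (fun S => k - 1 ≤ S.card),
        Pw w (univ \ {u}) S * ((k : ℝ) / ((S.card : ℝ) + 1))) / Z) :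
    ∀ u v : α,
      (0.2 * w u ≤ p u ∧ p u ≤ 1.6 * w u) ∧
      0.2 * |w u - w v| ≤ |p u - p v| := by
  have hZ_eq : Z = cardExpect w univ (fun m => if k ≤ m then 1 else 0) := by
    rw [hZ, ← sum_filter_powerset_eq_cardExpect w univ (k ≤ ·) fun _ => 1]
    simp only [mul_one]
  have hp_eq : ∀ u, p u = w u * (cardExpect w (univ.erase u) (selectProb k) / Z) := fun u => by
    rw [hp u, ← erase_eq, mul_div_assoc,
      sum_filter_powerset_eq_cardExpect w _ (k - 1 ≤ ·) fun m => (k : ℝ) / (m + 1)]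
    rfl
  have hZ_lo : 8 / 9 ≤ Z := hZ_eq ▸ eight_ninths_le_cardExpect_indicator hw hk hsum
  have hZ_hi : Z ≤ 1 := hZ_eq ▸ cardExpect_le_of_le hw fun m => by split_ifs <;> norm_num
  intro u v
  obtain ⟨hu_lo, hu_hi⟩ := sum_erase_mem_Icc hw univ u
  obtain ⟨huv_lo, huv_hi⟩ := sum_erase_mem_Icc hw (univ.erase u) v
  obtain ⟨hr_lo, hr_hi⟩ := cardExpect_selectProb_div_mem_Icc hw hk (A := univ.erase u)
    (by linarith) (by linarith) hZ_lo hZ_hi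
  set r := cardExpect w ((univ.erase u).erase v) (selectProb k) / Z
  obtain ⟨hr'_lo, -⟩ : r ∈ Set.Icc (1 / 5) (9 / 8) :=
    cardExpect_selectProb_div_mem_Icc hw hk (by linarith) (by linarith) hZ_lo hZ_hi
  have hdiff : p u - p v = (w u - w v) * r := by
    rw [hp_eq, hp_eq, ← mul_div_assoc, ← mul_div_assoc, ← sub_div,
      mul_cardExpect_erase_sub_mul_cardExpect_erase w (mem_univ u) (mem_univ v), mul_div_assoc]
  refine ⟨⟨?_, ?_⟩, ?_⟩
  · rw [hp_eq]; nlinarith [(hw u).1]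
  · rw [hp_eq]; nlinarith [(hw u).1]
  · rw [hdiff, abs_mul, abs_of_pos (by linarith : 0 < r)]
    nlinarith [abs_nonneg (w u - w v)]
end

section
/- Let q_i and q_j be disjoint nonempty finite sets, p a real-valued function defined on q_i ∪ q_j, u ∈ q_i, v ∈ q_j, and β ≥ 0, d ≥ 0 real numbers. Suppose p(x) ≥ p(u) − β·d for every x ∈ q_i, p(x) ≤ p(v) + β·d for every x ∈ q_j, and (Σ_{x∈q_i} p(x))/|q_i| − (Σ_{x∈q_j} p(x))/|q_j| ≤ (1 − 2β)·d. Then p(u) − p(v) ≤ d. (This is the cross-group individual fairness claim for a single quality profile vector in the analysis of quality compositional mechanisms: taking p to be the selection probabilities, x_i = Σ_{x∈q_i} p(x) and x_j = Σ_{x∈q_j} p(x) the numbers selected from each quality group, β·d a bound on within-group metric distances, and d the cross-group distance, selection probabilities of individuals in different quality groups differ by at most their metric distance.) -/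
open Finset

theorem stmt19_general {α : Type*} (qi qj : Finset α)
    (hqi : qi.Nonempty) (hqj : qj.Nonempty) (p : α → ℝ) (u v : α)
    (β d : ℝ)
    (hlow : ∀ x ∈ qi, p u - β * d ≤ p x)
    (hhigh : ∀ x ∈ qj, p x ≤ p v + β * d)
    (havg : (∑ x ∈ qi, p x) / (qi.card : ℝ) - (∑ x ∈ qj, p x) / (qj.card : ℝ)
      ≤ (1 - 2 * β) * d) :
    p u - p v ≤ d := by
  rw [← expect_eq_sum_div_card, ← expect_eq_sum_div_card] at havg
  have hmean_i : p u - β * d ≤ qi.expect p := le_expect hqi hlow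
  have hmean_j : qj.expect p ≤ p v + β * d := expect_le hqj hhigh
  linarith

/-- cross-group individual fairness for a single quality profile vector.
If `q_i, q_j` are disjoint nonempty finite quality groups, `u ∈ q_i`, `v ∈ q_j`,
`β, d ≥ 0`, `p(x) ≥ p(u) − β·d` on `q_i`, `p(x) ≤ p(v) + β·d` on `q_j`, and
`(Σ_{x∈q_i} p(x))/|q_i| − (Σ_{x∈q_j} p(x))/|q_j| ≤ (1 − 2β)·d`, then
`p(u) − p(v) ≤ d`. -/
theorem stmt19 {α : Type*} [DecidableEq α] (qi qj : Finset α) (hdisj : Disjoint qi qj)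
    (hqi : qi.Nonempty) (hqj : qj.Nonempty) (p : α → ℝ) (u v : α)
    (hu : u ∈ qi) (hv : v ∈ qj) (β d : ℝ) (hβ : 0 ≤ β) (hd : 0 ≤ d)
    (hlow : ∀ x ∈ qi, p u - β * d ≤ p x)
    (hhigh : ∀ x ∈ qj, p x ≤ p v + β * d)
    (havg : (∑ x ∈ qi, p x) / (qi.card : ℝ) - (∑ x ∈ qj, p x) / (qj.card : ℝ)
      ≤ (1 - 2 * β) * d) :
    p u - p v ≤ d :=
  stmt19_general qi qj hqi hqj p u v β d hlow hhigh havg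
end
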